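/- There exists a universal constant C > 0 such that the following holds. Let r > 2 be a real number, let M := ⌈π r⌉, and set b_k := r (cos(2πk/M), sin(2πk/M)) ∈ ℝ² for 0 ≤ k ≤ M−1. For λ > 0 and N ∈ ℝ², define S_λ(N) := Σ_{k=0}^{M−1} exp( −(‖b_0 − b_k‖₂² + 2λ ⟨N, b_0 − b_k⟩) / (2λ²) ). Then for every λ ∈ (0, M/10) and every N ∈ ℝ², | log S_λ(N) − log(1+λ) | ≤ C (1 + ‖N‖₂²). -/

import Mathlib

/-!
With `d = ‖b₀ - b_k‖`, the `k`-th summand is `exp (-d²/(2λ²) - ⟪N, b₀ - b_k⟫/λ)`, and since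
`πr ≤ M ≤ 4r` the chord `d` is comparable to the arc distance: `min k (M - k) ≤ d ≤ 2k`.

Upper bound: completing the square bounds each summand by `e^{(‖N‖+1/2)²/2} e^{-d/(2λ)}`, and
`∑ₖ e^{-min k (M-k)/(2λ)}` is at most two geometric series, each `≤ (1 - e^{-1/(2λ)})⁻¹ ≤ 1 + 2λ`.

Lower bound: the `⌊λ⌋ + 1 ≥ (1 + λ)/2` points with `k ≤ λ` have `d ≤ 2λ`, so each of their
summands is at least `e^{-2-2‖N‖}`.
-/

open scoped RealInnerProductSpace

/-- The `k`-th of `M` equally spaced points on the circle of radius `r` in `ℝ²`. -/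
noncomputable def circpt (r : ℝ) (M k : ℕ) : EuclideanSpace ℝ (Fin 2) :=
  (WithLp.equiv 2 (Fin 2 → ℝ)).symm
    ![r * Real.cos (2 * Real.pi * k / M), r * Real.sin (2 * Real.pi * k / M)]

/-- The partition function `S_λ(N)` of the single-block log-likelihood ratio. -/
noncomputable def Spart (r : ℝ) (M : ℕ) (lam : ℝ) (N : EuclideanSpace ℝ (Fin 2)) : ℝ :=
  ∑ k ∈ Finset.range M,
    Real.exp (-(‖circpt r M 0 - circpt r M k‖ ^ 2
      + 2 * lam * ⟪N, circpt r M 0 - circpt r M k⟫) / (2 * lam ^ 2))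

open Real Finset

section GaussTerm

variable {E : Type*} [NormedAddCommGroup E] [InnerProductSpace ℝ E]

noncomputable def gaussTerm (lam : ℝ) (N v : E) : ℝ :=
  exp (-(‖v‖ ^ 2 + 2 * lam * ⟪N, v⟫) / (2 * lam ^ 2))

/-- Completing the square in `t = ‖v‖ / λ`: `-t²/2 + ‖N‖ t ≤ (‖N‖ + 1/2)²/2 - t/2`. -/
lemma gaussTerm_le {lam : ℝ} (hlam : 0 < lam) (N v : E) :
    gaussTerm lam N v ≤ exp ((‖N‖ + 1 / 2) ^ 2 / 2) * exp (-(‖v‖ / (2 * lam))) := by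
  rw [gaussTerm, ← exp_add, exp_le_exp, div_le_iff₀ (by positivity)]
  have hinner : -(‖N‖ * ‖v‖) ≤ ⟪N, v⟫ := neg_le_of_abs_le (abs_real_inner_le_norm N v)
  have hexpand : ((‖N‖ + 1 / 2) ^ 2 / 2 + -(‖v‖ / (2 * lam))) * (2 * lam ^ 2)
      = lam ^ 2 * (‖N‖ + 1 / 2) ^ 2 - lam * ‖v‖ := by
    field_simp
    ring
  rw [hexpand]
  nlinarith [sq_nonneg (‖v‖ - lam * (‖N‖ + 1 / 2)), mul_le_mul_of_nonneg_left hinner hlam.le]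

lemma exp_le_gaussTerm {lam : ℝ} (hlam : 0 < lam) (N : E) {v : E} (hv : ‖v‖ ≤ 2 * lam) :
    exp (-2 - 2 * ‖N‖) ≤ gaussTerm lam N v := by
  rw [gaussTerm, exp_le_exp, le_div_iff₀ (by positivity)]
  have hinner : ⟪N, v⟫ ≤ ‖N‖ * (2 * lam) :=
    (real_inner_le_norm N v).trans (mul_le_mul_of_nonneg_left hv (norm_nonneg N))
  nlinarith [mul_le_mul_of_nonneg_left hinner hlam.le, norm_nonneg v]

end GaussTerm

lemma Spart_eq_sum_gaussTerm (r : ℝ) (M : ℕ) (lam : ℝ) (N : EuclideanSpace ℝ (Fin 2)) :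
    Spart r M lam N = ∑ k ∈ range M, gaussTerm lam N (circpt r M 0 - circpt r M k) :=
  rfl

lemma norm_circpt_zero_sub (r : ℝ) (M k : ℕ) :
    ‖circpt r M 0 - circpt r M k‖ = 2 * |r| * |sin (π * k / M)| := by
  have hcos : cos (2 * π * k / M) = 1 - 2 * sin (π * k / M) ^ 2 := by
    rw [show 2 * π * k / M = 2 * (π * k / M) by ring, cos_two_mul, cos_sq']
    ring
  have hsq : ‖circpt r M 0 - circpt r M k‖ ^ 2 = (2 * r * sin (π * k / M)) ^ 2 := by
    rw [EuclideanSpace.norm_sq_eq]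
    simp only [circpt, Fin.sum_univ_two, PiLp.sub_apply, WithLp.equiv_symm_apply,
      Matrix.cons_val_zero, Matrix.cons_val_one, Nat.cast_zero, mul_zero,
      zero_div, cos_zero, sin_zero, Real.norm_eq_abs, sq_abs]
    linear_combination r ^ 2 * sin_sq_add_cos_sq (2 * π * k / M) - 2 * r ^ 2 * hcos
  rw [← sqrt_sq (norm_nonneg _), hsq, sqrt_sq_eq_abs, abs_mul, abs_mul, abs_two]

lemma norm_circpt_zero_sub_le {r : ℝ} (hr : 0 ≤ r) {M : ℕ} (hM : π * r ≤ M) (k : ℕ) :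
    ‖circpt r M 0 - circpt r M k‖ ≤ 2 * k := by
  rw [norm_circpt_zero_sub, abs_of_nonneg hr]
  calc 2 * r * |sin (π * k / M)| ≤ 2 * r * (π * k / M) := by
        gcongr
        exact abs_sin_le_abs.trans (abs_of_nonneg (by positivity)).le
    _ = 2 * k * (π * r / M) := by ring
    _ ≤ 2 * k * 1 := by gcongr; exact div_le_one_of_le₀ hM (Nat.cast_nonneg M)
    _ = 2 * k := mul_one _

/-- Jordan's inequality `sin x ≥ 2x/π` on `[0, π/2]`, applied to the shorter arc. -/
lemma min_le_norm_circpt_zero_sub {r : ℝ} {M k : ℕ} (hM : (M : ℝ) ≤ 4 * r) (hk : k ≤ M) :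
    ((min k (M - k) : ℕ) : ℝ) ≤ ‖circpt r M 0 - circpt r M k‖ := by
  rcases Nat.eq_zero_or_pos M with rfl | hM0
  · simp
  set m := min k (M - k)
  have hMpos : (0 : ℝ) < M := by exact_mod_cast hM0
  have hr : 0 ≤ r := by linarith
  have hkM : (k : ℝ) ≤ M := by exact_mod_cast hk
  have h2m : 2 * (m : ℝ) ≤ M := by exact_mod_cast (show 2 * m ≤ M by omega)
  have hsin : |sin (π * k / M)| = sin (π * m / M) := by
    rw [abs_of_nonneg (sin_nonneg_of_nonneg_of_le_pi (by positivity)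
      (by rw [div_le_iff₀ hMpos]; nlinarith [pi_pos]))]
    rcases min_choice k (M - k) with h | h
    · rw [show m = k from h]
    · rw [show m = M - k from h, Nat.cast_sub hk,
        show π * (M - k : ℝ) / M = π - π * k / M by field_simp, sin_pi_sub]
  have hjordan : 2 / π * (π * m / M) ≤ sin (π * m / M) :=
    mul_le_sin (by positivity) (by rw [div_le_iff₀ hMpos]; nlinarith [pi_pos])
  rw [norm_circpt_zero_sub, abs_of_nonneg hr, hsin]
  calc (m : ℝ) ≤ 4 * r * m / M := by
        rw [le_div_iff₀ hMpos]; nlinarith [(Nat.cast_nonneg m : (0 : ℝ) ≤ m)]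
    _ = 2 * r * (2 / π * (π * m / M)) := by field_simp; ring
    _ ≤ 2 * r * sin (π * m / M) := by gcongr

lemma sum_range_pow_min_sub_le {q : ℝ} (hq0 : 0 ≤ q) (hq1 : q < 1) (M : ℕ) :
    ∑ k ∈ range M, q ^ min k (M - k) ≤ 2 / (1 - q) := by
  have hgeom : ∑ k ∈ range M, q ^ k ≤ 1 / (1 - q) := by
    have := geom_sum_Ico_le_of_lt_one (m := 0) (n := M) hq0 hq1
    rwa [← range_eq_Ico, pow_zero] at this
  have hreflect : ∑ k ∈ range M, q ^ (M - k) ≤ ∑ k ∈ range M, q ^ k := by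
    rw [← sum_range_reflect (q ^ ·) M]
    exact sum_le_sum fun k _ => pow_le_pow_of_le_one hq0 hq1.le (by omega)
  calc ∑ k ∈ range M, q ^ min k (M - k) ≤ ∑ k ∈ range M, (q ^ k + q ^ (M - k)) := by
        gcongr with k
        rcases min_choice k (M - k) with h | h <;> rw [h] <;>
          linarith [pow_nonneg hq0 k, pow_nonneg hq0 (M - k)]
    _ = ∑ k ∈ range M, q ^ k + ∑ k ∈ range M, q ^ (M - k) := sum_add_distrib
    _ ≤ 2 / (1 - q) := by rw [show 2 / (1 - q) = 1 / (1 - q) + 1 / (1 - q) by ring]; linarith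

lemma inv_one_sub_exp_neg_le {x : ℝ} (hx : 0 < x) : (1 - exp (-x))⁻¹ ≤ 1 + x⁻¹ := by
  have hexp : exp (-x) ≤ (1 + x)⁻¹ := by
    rw [exp_neg, add_comm]
    exact inv_anti₀ (by positivity) (add_one_le_exp x)
  have hgap : x / (1 + x) ≤ 1 - exp (-x) := by
    have : x / (1 + x) = 1 - (1 + x)⁻¹ := by field_simp; ring
    linarith
  calc (1 - exp (-x))⁻¹ ≤ (x / (1 + x))⁻¹ := inv_anti₀ (by positivity) hgap
    _ = 1 + x⁻¹ := by field_simp; ring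

lemma Spart_le {r : ℝ} {M : ℕ} (hM : (M : ℝ) ≤ 4 * r) {lam : ℝ} (hlam : 0 < lam)
    (N : EuclideanSpace ℝ (Fin 2)) :
    Spart r M lam N ≤ 2 * (1 + 2 * lam) * exp ((‖N‖ + 1 / 2) ^ 2 / 2) := by
  set q := exp (-(1 / (2 * lam)))
  have hq1 : q < 1 := exp_lt_one_iff.mpr (neg_neg_of_pos (by positivity))
  have hterm : ∀ k ∈ range M, gaussTerm lam N (circpt r M 0 - circpt r M k)
      ≤ exp ((‖N‖ + 1 / 2) ^ 2 / 2) * q ^ min k (M - k) := by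
    intro k hk
    refine (gaussTerm_le hlam N _).trans (mul_le_mul_of_nonneg_left ?_ (exp_pos _).le)
    rw [← exp_nat_mul, exp_le_exp, mul_neg, mul_one_div, neg_le_neg_iff]
    gcongr
    exact min_le_norm_circpt_zero_sub hM (mem_range.mp hk).le
  have hsum : ∑ k ∈ range M, q ^ min k (M - k) ≤ 2 * (1 + 2 * lam) :=
    calc ∑ k ∈ range M, q ^ min k (M - k) ≤ 2 * (1 - q)⁻¹ :=
          (sum_range_pow_min_sub_le (exp_pos _).le hq1 M).trans_eq (div_eq_mul_inv _ _)
      _ ≤ 2 * (1 + (1 / (2 * lam))⁻¹) := by gcongr; exact inv_one_sub_exp_neg_le (by positivity)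
      _ = 2 * (1 + 2 * lam) := by rw [one_div, inv_inv]
  calc Spart r M lam N
      = ∑ k ∈ range M, gaussTerm lam N (circpt r M 0 - circpt r M k) :=
        Spart_eq_sum_gaussTerm r M lam N
    _ ≤ ∑ k ∈ range M, exp ((‖N‖ + 1 / 2) ^ 2 / 2) * q ^ min k (M - k) := sum_le_sum hterm
    _ = exp ((‖N‖ + 1 / 2) ^ 2 / 2) * ∑ k ∈ range M, q ^ min k (M - k) := (mul_sum _ _ _).symm
    _ ≤ exp ((‖N‖ + 1 / 2) ^ 2 / 2) * (2 * (1 + 2 * lam)) := by gcongr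
    _ = 2 * (1 + 2 * lam) * exp ((‖N‖ + 1 / 2) ^ 2 / 2) := mul_comm _ _

lemma le_Spart {r : ℝ} (hr : 0 ≤ r) {M : ℕ} (hM : π * r ≤ M) {lam : ℝ} (hlam : 0 < lam)
    (hlamM : lam < M) (N : EuclideanSpace ℝ (Fin 2)) :
    (1 + lam) / 2 * exp (-2 - 2 * ‖N‖) ≤ Spart r M lam N := by
  set n := ⌊lam⌋₊
  have hn : (1 + lam) / 2 ≤ n + 1 := by
    linarith [Nat.lt_floor_add_one lam, (Nat.cast_nonneg n : (0 : ℝ) ≤ n)]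
  have hnM : n + 1 ≤ M := (Nat.floor_lt hlam.le).mpr hlamM
  have hnear : ∀ k ∈ range (n + 1), exp (-2 - 2 * ‖N‖)
      ≤ gaussTerm lam N (circpt r M 0 - circpt r M k) := by
    intro k hk
    have hk : (k : ℝ) ≤ lam := (Nat.le_floor_iff hlam.le).mp (Nat.lt_succ_iff.mp (mem_range.mp hk))
    exact exp_le_gaussTerm hlam N ((norm_circpt_zero_sub_le hr hM k).trans (by linarith))
  calc (1 + lam) / 2 * exp (-2 - 2 * ‖N‖) ≤ (n + 1) * exp (-2 - 2 * ‖N‖) := by gcongr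
    _ = ∑ _k ∈ range (n + 1), exp (-2 - 2 * ‖N‖) := by simp
    _ ≤ ∑ k ∈ range (n + 1), gaussTerm lam N (circpt r M 0 - circpt r M k) := sum_le_sum hnear
    _ ≤ ∑ k ∈ range M, gaussTerm lam N (circpt r M 0 - circpt r M k) :=
      sum_le_sum_of_subset_of_nonneg (range_subset_range.mpr hnM) fun _ _ _ => (exp_pos _).le
    _ = Spart r M lam N := (Spart_eq_sum_gaussTerm r M lam N).symm

lemma abs_log_sub_log_le {x y A : ℝ} (hy : 0 < y) (hlow : y * exp (-A) ≤ x)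
    (hup : x ≤ y * exp A) : |log x - log y| ≤ A := by
  have hx : 0 < x := (by positivity : 0 < y * exp (-A)).trans_le hlow
  have hlog_up := log_le_log hx hup
  have hlog_low := log_le_log (by positivity) hlow
  rw [log_mul hy.ne' (exp_pos _).ne', log_exp] at hlog_up hlog_low
  rw [abs_sub_le_iff]
  constructor <;> linarith

/-- **Small-`λ` sandwich for the block partition function.** There is a universal constant
`C > 0` such that for every `r > 2`, with `M = ⌈πr⌉`, every `λ ∈ (0, M/10)` and every `N`,
`|log S_λ(N) − log(1+λ)| ≤ C (1 + ‖N‖²)`. -/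
theorem stmt14 :
    ∃ C : ℝ, 0 < C ∧
      ∀ r : ℝ, 2 < r →
        ∀ lam : ℝ, 0 < lam → lam < (Nat.ceil (Real.pi * r) : ℝ) / 10 →
          ∀ N : EuclideanSpace ℝ (Fin 2),
            |Real.log (Spart r (Nat.ceil (Real.pi * r)) lam N) - Real.log (1 + lam)|
              ≤ C * (1 + ‖N‖ ^ 2) := by
  refine ⟨4, by norm_num, fun r hr lam hlam hlamM N => ?_⟩
  set M := ⌈π * r⌉₊
  have hπr : π * r ≤ M := Nat.le_ceil _
  have hM4r : (M : ℝ) ≤ 4 * r := by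
    nlinarith [Nat.ceil_lt_add_one (by positivity : 0 ≤ π * r), pi_lt_d2]
  have hN := sq_nonneg (‖N‖ - 1 / 2)
  apply abs_log_sub_log_le (by positivity)
  · have hexp_neg_one : exp (-1) ≤ 1 / 2 := by
      rw [exp_neg, one_div]
      exact inv_anti₀ two_pos (by linarith [add_one_le_exp 1])
    calc (1 + lam) * exp (-(4 * (1 + ‖N‖ ^ 2)))
        ≤ (1 + lam) * (exp (-1) * exp (-2 - 2 * ‖N‖)) := by
          rw [← exp_add]; gcongr; nlinarith
      _ ≤ (1 + lam) * (1 / 2 * exp (-2 - 2 * ‖N‖)) := by gcongr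
      _ = (1 + lam) / 2 * exp (-2 - 2 * ‖N‖) := by ring
      _ ≤ Spart r M lam N := le_Spart (by linarith) hπr hlam (by linarith) N
  · have hfour : 4 ≤ exp 3 := by linarith [add_one_le_exp 3]
    calc Spart r M lam N ≤ 2 * (1 + 2 * lam) * exp ((‖N‖ + 1 / 2) ^ 2 / 2) := Spart_le hM4r hlam N
      _ ≤ (1 + lam) * exp 3 * exp ((‖N‖ + 1 / 2) ^ 2 / 2) :=
          mul_le_mul_of_nonneg_right (by nlinarith) (exp_pos _).le
      _ ≤ (1 + lam) * exp (4 * (1 + ‖N‖ ^ 2)) := by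
          rw [mul_assoc, ← exp_add]; gcongr; nlinarith
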